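/- Let R ⊆ S_n be a top-k partial ranking, σ ∈ R, and τ ∈ S_n. Then the Kendall distance satisfies d(A_R(σ), τ) = d(σ, τ) + C(n−k, 2) − 2·d(σ, Π_R(τ)). -/

import Mathlib

/-- The Kendall (tau) distance between two permutations of `Fin n`:
the number of pairs `(x, y)` with `x < y` on which `σ⁻¹` and `τ⁻¹`
disagree in relative order. -/
def kendallDist {n : ℕ} (σ τ : Equiv.Perm (Fin n)) : ℕ :=
  (Finset.univ.filter (fun p : Fin n × Fin n =>
    p.1 < p.2 ∧ ¬((σ⁻¹ p.1 < σ⁻¹ p.2) ↔ (τ⁻¹ p.1 < τ⁻¹ p.2)))).card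

/-- The top-`k` partial ranking determined by the items `a 0, …, a (k-1)`:
the set of full rankings (permutations) `σ` with `σ i = a i` for the first
`k` positions. -/
def topkFinset {n k : ℕ} (hk : k ≤ n) (a : Fin k → Fin n) :
    Finset (Equiv.Perm (Fin n)) :=
  Finset.univ.filter fun σ => ∀ i : Fin k, σ (Fin.castLE hk i) = a i

/-- The permutation of `Fin n` fixing the first `k` positions and reversing
the order of the remaining `n - k` positions. -/
def revAfter (n k : ℕ) : Equiv.Perm (Fin n) :=
  Function.Involutive.toPerm
    (fun p => if _h : (p : ℕ) < k then p
      else ⟨n + k - 1 - (p : ℕ), by have := p.isLt; omega⟩)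
    (by
      intro p
      have hp := p.isLt
      by_cases h : (p : ℕ) < k
      · simp [h]
      · have h2 : ¬ (n + k - 1 - (p : ℕ) < k) := by omega
        simp only [dif_neg h, dif_neg h2]
        ext
        simp
        omega)

/-- The antithetic permutation of `σ` relative to a top-`k` partial ranking:
the first `k` positions are unchanged and the remaining positions are
reversed, i.e. `A σ (k+j) = σ (n+1-j)` (in 1-indexed notation). -/
def antithetic (n k : ℕ) (σ : Equiv.Perm (Fin n)) : Equiv.Perm (Fin n) :=
  σ * revAfter n k

/-
Let `T` be the set of items that `σ` ranks after position `k`; every ranking in `R` puts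
exactly the items of `T` into its tail. Composing with `revAfter n k` reverses the `σ`-order
of the pairs inside `T` and keeps every other pair, so `d(A σ, τ) = d(σ, τ) + C(n-k, 2) - 2 c`,
where `c` counts the pairs inside `T` on which `σ` and `τ` disagree. The minimizer `π` orders
its tail as `τ` does (otherwise an adjacent transposition in the tail would bring it closer to
`τ`) and every other pair as `σ` does, so `c = d(σ, π)`.
-/

open Finset Equiv

lemma card_filter_xor {α : Type*} (s : Finset α) (p q : α → Prop) [DecidablePred p]
    [DecidablePred q] :
    (#{a ∈ s | Xor (p a) (q a)} : ℤ) =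
      #{a ∈ s | p a} + #{a ∈ s | q a} - 2 * #{a ∈ s | p a ∧ q a} := by
  simp only [card_filter]
  push_cast
  rw [mul_sum, ← sum_add_distrib, ← sum_sub_distrib]
  refine sum_congr rfl fun a _ => ?_
  by_cases hp : p a <;> by_cases hq : q a <;> simp [hp, hq]

def ReversesOn {α : Type*} [LinearOrder α] (ρ : Perm α) (S : Finset α) : Prop :=
  ∀ i j, i ≠ j → (ρ i < ρ j ↔ Xor (i < j) (i ∈ S ∧ j ∈ S))

lemma reversesOn_swap {α : Type*} [LinearOrder α] {i j : α} (h : i ⋖ j) :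
    ReversesOn (swap i j) {i, j} := by
  intro s t hst
  have := h.lt
  have := h.2
  rw [swap_apply_def, swap_apply_def]
  simp only [mem_insert, mem_singleton]
  split_ifs <;> grind [Xor]

lemma revAfter_inv (n k : ℕ) : (revAfter n k)⁻¹ = revAfter n k :=
  Function.Involutive.toPerm_symm _

lemma val_revAfter (n k : ℕ) (i : Fin n) :
    (revAfter n k i : ℕ) = if (i : ℕ) < k then (i : ℕ) else n + k - 1 - i := by
  by_cases h : (i : ℕ) < k <;> simp [revAfter, Function.Involutive.toPerm, h]

lemma reversesOn_revAfter (n k : ℕ) :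
    ReversesOn (revAfter n k)⁻¹ {i : Fin n | k ≤ (i : ℕ)} := by
  intro i j hij
  have := Fin.val_ne_of_ne hij
  simp only [revAfter_inv, Fin.lt_def, val_revAfter, mem_filter, mem_univ, true_and, Xor]
  split_ifs <;> omega

variable {n : ℕ}

lemma card_filter_le_val (k : ℕ) : #{i : Fin n | k ≤ (i : ℕ)} = n - k := by
  have hhead : #{i : Fin n | (i : ℕ) < k} = min n k := Fin.card_filter_val_lt
  have hsplit := card_filter_add_card_filter_not (s := univ) fun i : Fin n => (i : ℕ) < k
  simp only [not_lt, card_univ, Fintype.card_fin] at hsplit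
  omega

def ascPairs (n : ℕ) : Finset (Fin n × Fin n) := {p | p.1 < p.2}

lemma mem_ascPairs {p : Fin n × Fin n} : p ∈ ascPairs n ↔ p.1 < p.2 := by
  simp [ascPairs]

def Discordant (σ τ : Perm (Fin n)) (x y : Fin n) : Prop :=
  ¬((σ⁻¹ x < σ⁻¹ y) ↔ (τ⁻¹ x < τ⁻¹ y))

instance (σ τ : Perm (Fin n)) (x y : Fin n) : Decidable (Discordant σ τ x y) :=
  inferInstanceAs (Decidable ¬_)

lemma kendallDist_eq_card_discordant (σ τ : Perm (Fin n)) :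
    kendallDist σ τ = #{p ∈ ascPairs n | Discordant σ τ p.1 p.2} := by
  rw [ascPairs, filter_filter]
  rfl

lemma card_ascPairs_filter_inv_mem (σ : Perm (Fin n)) (S : Finset (Fin n)) :
    #{p ∈ ascPairs n | σ⁻¹ p.1 ∈ S ∧ σ⁻¹ p.2 ∈ S} = (#S).choose 2 := by
  rw [← card_map σ.toEmbedding, ← card_product_filter_lt]
  congr 1
  ext p
  simp [ascPairs, mem_map_equiv]
  tauto

lemma discordant_mul_iff {ρ : Perm (Fin n)} {S : Finset (Fin n)} (hρ : ReversesOn ρ⁻¹ S)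
    (σ τ : Perm (Fin n)) {x y : Fin n} (hxy : x ≠ y) :
    Discordant (σ * ρ) τ x y ↔ Xor (Discordant σ τ x y) (σ⁻¹ x ∈ S ∧ σ⁻¹ y ∈ S) := by
  simp only [Discordant, mul_inv_rev, Perm.mul_apply, hρ _ _ ((σ⁻¹).injective.ne hxy), Xor]
  tauto

theorem kendallDist_mul_of_reversesOn {ρ : Perm (Fin n)} {S : Finset (Fin n)}
    (hρ : ReversesOn ρ⁻¹ S) (σ τ : Perm (Fin n)) :
    (kendallDist (σ * ρ) τ : ℤ) = kendallDist σ τ + (#S).choose 2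
      - 2 * #{p ∈ ascPairs n | Discordant σ τ p.1 p.2 ∧ σ⁻¹ p.1 ∈ S ∧ σ⁻¹ p.2 ∈ S} := by
  rw [kendallDist_eq_card_discordant, kendallDist_eq_card_discordant,
    filter_congr fun p hp => discordant_mul_iff hρ σ τ (mem_ascPairs.1 hp).ne,
    card_filter_xor, card_ascPairs_filter_inv_mem]

theorem kendallDist_mul_swap_lt {π τ : Perm (Fin n)} {i j : Fin n} (hij : i ⋖ j)
    (hτ : τ⁻¹ (π j) < τ⁻¹ (π i)) : kendallDist (π * swap i j) τ < kendallDist π τ := by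
  set S : Finset (Fin n) := {i, j} with hS
  have hdist := kendallDist_mul_of_reversesOn (by rw [swap_inv]; exact reversesOn_swap hij) π τ
  have hall : ∀ p ∈ ascPairs n, Discordant π τ p.1 p.2 ∧ π⁻¹ p.1 ∈ S ∧ π⁻¹ p.2 ∈ S ↔
      π⁻¹ p.1 ∈ S ∧ π⁻¹ p.2 ∈ S := by
    rintro ⟨x, y⟩ hp
    obtain ⟨u, rfl⟩ := π.surjective x
    obtain ⟨v, rfl⟩ := π.surjective y
    have huv : u ≠ v := fun h => (mem_ascPairs.1 hp).ne (congrArg π h)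
    have hπ : ∀ w, π⁻¹ (π w) = w := π.symm_apply_apply
    simp only [Discordant, hπ, hS, mem_insert, mem_singleton, and_iff_right_iff_imp]
    rintro ⟨rfl | rfl, rfl | rfl⟩
    · exact absurd rfl huv
    · exact fun h => hτ.not_gt (h.1 hij.lt)
    · exact fun h => hij.lt.not_gt (h.2 hτ)
    · exact absurd rfl huv
  rw [filter_congr hall, card_ascPairs_filter_inv_mem, card_pair hij.lt.ne] at hdist
  norm_num at hdist
  omega

variable {k : ℕ} {hk : k ≤ n} {a : Fin k → Fin n}

lemma mul_mem_topkFinset {σ ρ : Perm (Fin n)} (hσ : σ ∈ topkFinset hk a)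
    (hρ : ∀ i : Fin n, (i : ℕ) < k → ρ i = i) : σ * ρ ∈ topkFinset hk a := by
  simp only [topkFinset, mem_filter, mem_univ, true_and, Perm.mul_apply] at hσ ⊢
  intro i
  rw [hρ _ (by simp), hσ]

lemma inv_mul_apply_of_mem_topkFinset {σ π : Perm (Fin n)} (hσ : σ ∈ topkFinset hk a)
    (hπ : π ∈ topkFinset hk a) (i : Fin n) (hi : (i : ℕ) < k) : (π⁻¹ * σ) i = i := by
  simp only [topkFinset, mem_filter, mem_univ, true_and] at hσ hπ
  have hcast : Fin.castLE hk ⟨i, hi⟩ = i := rfl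
  rw [Perm.mul_apply, Perm.inv_eq_iff_eq, ← hcast, hσ, hπ]

lemma le_apply_of_forall_lt_apply_eq {ρ : Perm (Fin n)}
    (hρ : ∀ i : Fin n, (i : ℕ) < k → ρ i = i) {i : Fin n} (hi : k ≤ (i : ℕ)) :
    k ≤ (ρ i : ℕ) := by
  by_contra! h
  rw [ρ.injective (hρ _ h)] at h
  omega

lemma apply_lt_apply_iff_of_forall_lt_apply_eq {ρ : Perm (Fin n)}
    (hρ : ∀ i : Fin n, (i : ℕ) < k → ρ i = i) {i j : Fin n}
    (hij : ¬(k ≤ (i : ℕ) ∧ k ≤ (j : ℕ))) : ρ i < ρ j ↔ i < j := by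
  rcases Nat.lt_or_ge (i : ℕ) k with hi | hi <;> rcases Nat.lt_or_ge (j : ℕ) k with hj | hj
  · rw [hρ i hi, hρ j hj]
  · have := le_apply_of_forall_lt_apply_eq hρ hj
    simp only [Fin.lt_def, hρ i hi]
    omega
  · have := le_apply_of_forall_lt_apply_eq hρ hi
    simp only [Fin.lt_def, hρ j hj]
    omega
  · exact absurd ⟨hi, hj⟩ hij

theorem strictMonoOn_of_isMin_kendallDist {π τ : Perm (Fin n)} (hπ : π ∈ topkFinset hk a)
    (hmin : ∀ ρ ∈ topkFinset hk a, kendallDist π τ ≤ kendallDist ρ τ) :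
    StrictMonoOn (fun i => τ⁻¹ (π i)) {i : Fin n | k ≤ (i : ℕ)} := by
  have hup : IsUpperSet {i : Fin n | k ≤ (i : ℕ)} := fun _ _ hij (hi : k ≤ _) =>
    le_trans hi (Fin.le_def.1 hij)
  refine strictMonoOn_of_lt_succ hup.ordConnected fun i hmax (hi : k ≤ (i : ℕ)) _ => ?_
  have hcov := Order.covBy_succ_of_not_isMax hmax
  have hfix : ∀ l : Fin n, (l : ℕ) < k → swap i (Order.succ i) l = l := fun l hl =>
    swap_apply_of_ne_of_ne (Fin.ne_of_lt (by omega))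
      (Fin.ne_of_lt ((by omega : l < i).trans hcov.lt))
  by_contra! h
  have hlt := h.lt_of_ne ((τ⁻¹).injective.ne (π.injective.ne hcov.lt.ne'))
  exact (hmin _ (mul_mem_topkFinset hπ hfix)).not_gt (kendallDist_mul_swap_lt hcov hlt)

theorem discordant_iff_of_isMin_kendallDist {σ π τ : Perm (Fin n)}
    (hσ : σ ∈ topkFinset hk a) (hπ : π ∈ topkFinset hk a)
    (hmin : ∀ ρ ∈ topkFinset hk a, kendallDist π τ ≤ kendallDist ρ τ) (x y : Fin n) :
    Discordant σ π x y ↔ Discordant σ τ x y ∧ k ≤ (σ⁻¹ x : ℕ) ∧ k ≤ (σ⁻¹ y : ℕ) := by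
  have hρ := inv_mul_apply_of_mem_topkFinset hσ hπ
  have hπinv : ∀ z, π⁻¹ z = (π⁻¹ * σ) (σ⁻¹ z) := fun z => by simp
  by_cases htail : k ≤ (σ⁻¹ x : ℕ) ∧ k ≤ (σ⁻¹ y : ℕ)
  · have hx := le_apply_of_forall_lt_apply_eq hρ htail.1
    have hy := le_apply_of_forall_lt_apply_eq hρ htail.2
    rw [← hπinv] at hx hy
    have hτ := (strictMonoOn_of_isMin_kendallDist hπ hmin).lt_iff_lt hx hy
    have hπ' : ∀ z, π (π⁻¹ z) = z := π.apply_symm_apply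
    simp only [hπ'] at hτ
    simp only [Discordant, ← hτ, htail, and_self, and_true]
  · simp only [Discordant, hπinv, apply_lt_apply_iff_of_forall_lt_apply_eq hρ htail, htail]
    simp

theorem kendallDist_antithetic_proj_general {n k : ℕ} (hk : k ≤ n) (a : Fin k → Fin n)
    (σ τ π : Equiv.Perm (Fin n))
    (hσ : σ ∈ topkFinset hk a) (hπ : π ∈ topkFinset hk a)
    (hmin : ∀ ρ ∈ topkFinset hk a, kendallDist π τ ≤ kendallDist ρ τ) :
    (kendallDist (antithetic n k σ) τ : ℤ) =
      (kendallDist σ τ : ℤ) + ((n - k).choose 2 : ℤ)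
        - 2 * (kendallDist σ π : ℤ) := by
  have hσπ : kendallDist σ π = #{p ∈ ascPairs n | Discordant σ τ p.1 p.2 ∧
      σ⁻¹ p.1 ∈ ({i | k ≤ (i : ℕ)} : Finset (Fin n)) ∧
      σ⁻¹ p.2 ∈ ({i | k ≤ (i : ℕ)} : Finset (Fin n))} := by
    rw [kendallDist_eq_card_discordant]
    refine congrArg card (filter_congr fun p _ => ?_)
    simpa using discordant_iff_of_isMin_kendallDist hσ hπ hmin p.1 p.2
  rw [antithetic, kendallDist_mul_of_reversesOn (reversesOn_revAfter n k), card_filter_le_val, hσπ]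

/-- For a top-`k` partial ranking `R`, `σ ∈ R` and any `τ ∈ S_n`,
`d(A_R(σ), τ) = d(σ, τ) + C(n−k, 2) − 2·d(σ, Π_R(τ))`, where `Π_R(τ)` is the
(unique) Kendall-closest element of `R` to `τ`, here characterized as any
minimizer `π`. -/
theorem kendallDist_antithetic_proj {n k : ℕ} (hk : k ≤ n) (a : Fin k → Fin n)
    (ha : Function.Injective a) (σ τ π : Equiv.Perm (Fin n))
    (hσ : σ ∈ topkFinset hk a) (hπ : π ∈ topkFinset hk a)
    (hmin : ∀ ρ ∈ topkFinset hk a, kendallDist π τ ≤ kendallDist ρ τ) :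
    (kendallDist (antithetic n k σ) τ : ℤ) =
      (kendallDist σ τ : ℤ) + ((n - k).choose 2 : ℤ)
        - 2 * (kendallDist σ π : ℤ) :=
  kendallDist_antithetic_proj_general hk a σ τ π hσ hπ hmin
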